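/- Let I be a finite nonempty collection of subsets of a finite ground set X, α ∈ (0, 1], Γ > 0, Δ ∈ (0, Γ], k ∈ [0, 1], and H : 2^X × ℝ → ℝ. Suppose: (i) for every S ∈ I and all 0 ≤ τ ≤ τ', H(S, τ') − H(S, τ) ≤ τ' − τ; (ii) for each i ∈ {0, 1, …, ⌈Γ/Δ⌉} with τ_i = iΔ, the set S_i^G ∈ I satisfies H(S_i^G, τ_i) ≥ (1/(1 + k)) max_{S ∈ I} H(S, τ_i) − (k/(1 + k)) Γ (1/α − 1); and (iii) (S^G, τ^G) is a pair (S_i^G, τ_i) maximizing H(S_i^G, τ_i) over i ∈ {0, 1, …, ⌈Γ/Δ⌉}. Then H(S^G, τ^G) ≥ (1/(1 + k)) (sup_{S ∈ I, τ ∈ [0, Γ]} H(S, τ) − Δ) − (k/(1 + k)) Γ (1/α − 1). -/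
import Mathlib


/-- Approximation guarantee of the Sequential Greedy Algorithm (exact oracle).
Assuming (i) the forward 1-Lipschitz bound in `τ` for all feasible sets, (ii) the per-`τ`
curvature-dependent greedy guarantee at every grid point `τ_i = iΔ`, `i = 0, …, ⌈Γ/Δ⌉`, and
(iii) that `(S^G, τ^G) = (SG i₀, i₀Δ)` is the best grid pair, one has
`H(S^G, τ^G) ≥ (1/(1+k)) (sup_{S ∈ I, τ ∈ [0,Γ]} H(S,τ) - Δ) - (k/(1+k)) Γ (1/α - 1)`. -/
theorem sequential_greedy_guarantee
    {α : Type*} [Fintype α] [DecidableEq α]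
    (I : Finset (Finset α)) (hI : I.Nonempty)
    (a Γ Δ k : ℝ)
    (ha : a ∈ Set.Ioc (0 : ℝ) 1) (hΓ : 0 < Γ) (hΔ : 0 < Δ) (hΔΓ : Δ ≤ Γ)
    (hk : k ∈ Set.Icc (0 : ℝ) 1)
    (H : Finset α → ℝ → ℝ)
    (hgrad : ∀ S ∈ I, ∀ τ τ' : ℝ, 0 ≤ τ → τ ≤ τ' → H S τ' - H S τ ≤ τ' - τ)
    (SG : ℕ → Finset α)
    (hSGmem : ∀ i ≤ ⌈Γ / Δ⌉₊, SG i ∈ I)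
    (hSGgreedy : ∀ i ≤ ⌈Γ / Δ⌉₊,
      H (SG i) (i * Δ) ≥
        (1 / (1 + k)) * (I.sup' hI fun S => H S (i * Δ)) -
          (k / (1 + k)) * Γ * (1 / a - 1))
    (i₀ : ℕ) (hi₀ : i₀ ≤ ⌈Γ / Δ⌉₊)
    (hbest : ∀ i ≤ ⌈Γ / Δ⌉₊, H (SG i) (i * Δ) ≤ H (SG i₀) (i₀ * Δ)) :
    H (SG i₀) (i₀ * Δ) ≥
      (1 / (1 + k)) *
          ((⨆ τ : Set.Icc (0 : ℝ) Γ, I.sup' hI fun S => H S (τ : ℝ)) - Δ) -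
        (k / (1 + k)) * Γ * (1 / a - 1) := by
  have h1k : (0:ℝ) < 1 + k := by linarith [hk.1]
  set c : ℝ := (k / (1 + k)) * Γ * (1 / a - 1) with hc
  set B : ℝ := H (SG i₀) (i₀ * Δ) with hB
  -- key bound on each grid-free τ
  have key : ∀ τ : Set.Icc (0:ℝ) Γ,
      (I.sup' hI fun S => H S (τ : ℝ)) ≤ (1 + k) * (B + c) + Δ := by
    intro τ
    obtain ⟨τ, hτ0, hτΓ⟩ := τ
    set i : ℕ := ⌊τ / Δ⌋₊ with hi
    have hiLe : i ≤ ⌈Γ / Δ⌉₊ :=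
      le_trans (Nat.floor_le_ceil _) (Nat.ceil_le_ceil (div_le_div_of_nonneg_right hτΓ hΔ.le))
    have hτ0' : (0:ℝ) ≤ τ / Δ := by positivity
    have hile : (i : ℝ) * Δ ≤ τ := by
      have := Nat.floor_le hτ0'
      calc (i : ℝ) * Δ ≤ (τ / Δ) * Δ := mul_le_mul_of_nonneg_right this hΔ.le
        _ = τ := by field_simp
    have hτle : τ ≤ (i : ℝ) * Δ + Δ := by
      have h1 : τ / Δ < (i : ℝ) + 1 := Nat.lt_floor_add_one _
      have := mul_le_mul_of_nonneg_right h1.le hΔ.le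
      have hτeq : (τ / Δ) * Δ = τ := by field_simp
      nlinarith
    have hi0 : (0:ℝ) ≤ (i:ℝ) * Δ := by positivity
    have hsup : (I.sup' hI fun S => H S τ) ≤ (I.sup' hI fun S => H S (i * Δ)) + Δ := by
      apply Finset.sup'_le
      intro S hS
      have h1 := hgrad S hS ((i:ℝ) * Δ) τ hi0 hile
      have h2 : H S (i * Δ) ≤ I.sup' hI fun S => H S (i * Δ) :=
        Finset.le_sup' (fun S => H S ((i:ℝ) * Δ)) hS
      linarith
    have hg := hSGgreedy i hiLe
    have hb := hbest i hiLe
    have hsup2 : (I.sup' hI fun S => H S (i * Δ)) ≤ (1 + k) * (B + c) := by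
      have : (1 / (1 + k)) * (I.sup' hI fun S => H S (i * Δ)) ≤ B + c := by
        simp only [hc] at hg ⊢; linarith
      have h := mul_le_mul_of_nonneg_left this h1k.le
      have hinv : (1 + k) * (1 / (1 + k)) = 1 := mul_one_div_cancel h1k.ne'
      calc (I.sup' hI fun S => H S (i * Δ))
          = (1 + k) * (1 / (1 + k)) * (I.sup' hI fun S => H S (i * Δ)) := by
            rw [hinv, one_mul]
        _ = (1 + k) * ((1 / (1 + k)) * (I.sup' hI fun S => H S (i * Δ))) := by ring
        _ ≤ (1 + k) * (B + c) := h
    linarith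
  have hne : Nonempty (Set.Icc (0:ℝ) Γ) := ⟨⟨0, le_refl _, hΓ.le⟩⟩
  have hsupLe : (⨆ τ : Set.Icc (0 : ℝ) Γ, I.sup' hI fun S => H S (τ : ℝ))
      ≤ (1 + k) * (B + c) + Δ := ciSup_le key
  rw [ge_iff_le, sub_le_iff_le_add, div_mul_eq_mul_div, div_le_iff₀ h1k]
  nlinarith [hsupLe]
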